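/- D'Ocagne's identity for bicomplex k-Fibonacci quaternions: Q_{k,n}·Q_{k,m+1} − Q_{k,n+1}·Q_{k,m} = (−1)^m·F_{k,n−m}·(2(k²+2)·j + (k³+2k)·ij) for all n ≥ m ≥ 0. -/

import Mathlib

open TensorProduct

noncomputable def kFib (k : ℝ) : ℕ → ℝ
  | 0 => 0
  | 1 => 1
  | n + 2 => k * kFib k (n + 1) + kFib k n

abbrev Bicomplex : Type := ℂ ⊗[ℝ] ℂ

noncomputable def bi : Bicomplex := (Complex.I : ℂ) ⊗ₜ[ℝ] (1 : ℂ)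
noncomputable def bj : Bicomplex := (1 : ℂ) ⊗ₜ[ℝ] (Complex.I : ℂ)

noncomputable def Q (k : ℝ) (n : ℕ) : Bicomplex :=
  algebraMap ℝ Bicomplex (kFib k n) + kFib k (n + 1) • bi
    + kFib k (n + 2) • bj + kFib k (n + 3) • (bi * bj)

/-! The determinants `D n m = x n * x (m + 1) - x (n + 1) * x m` of any sequence `x` in a commutative
`ℝ`-algebra with `x (n + 2) = k • x (n + 1) + x n` satisfy `D (n + 1) (m + 1) = -D n m` and
`D d 0 = F_{k,d} • D 1 0`, so `D (m + d) m = (-1) ^ m F_{k,d} • D 1 0`. The bicomplex k-Fibonacci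
quaternions form such a sequence, and `D 1 0 = Q₁² - Q₂ Q₀` is read off the multiplication table
`i² = j² = -1`. -/

theorem kFib_add_two (k : ℝ) (n : ℕ) : kFib k (n + 2) = k * kFib k (n + 1) + kFib k n := rfl

section Recurrence

variable {A : Type*} [CommRing A] [Algebra ℝ A] {k : ℝ} {x : ℕ → A}

theorem mul_sub_mul_succ_succ_of_recurrence (hx : ∀ n, x (n + 2) = k • x (n + 1) + x n) (n m : ℕ) :
    x (n + 1) * x (m + 2) - x (n + 2) * x (m + 1) = -(x n * x (m + 1) - x (n + 1) * x m) := by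
  rw [hx, hx, Algebra.smul_def, Algebra.smul_def]
  ring

theorem mul_sub_mul_zero_of_recurrence (hx : ∀ n, x (n + 2) = k • x (n + 1) + x n) (d : ℕ) :
    x d * x 1 - x (d + 1) * x 0 = kFib k d • (x 1 * x 1 - x 2 * x 0) := by
  induction d using Nat.twoStepInduction with
  | zero => simp [kFib, mul_comm]
  | one => simp [kFib]
  | more d ih₀ ih₁ =>
    rw [hx, hx (d + 1), kFib_add_two, add_smul, mul_smul, ← ih₀, ← ih₁, hx d]
    simp only [Algebra.smul_def]
    ring

theorem dOcagne_of_recurrence (hx : ∀ n, x (n + 2) = k • x (n + 1) + x n) (m d : ℕ) :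
    x (m + d) * x (m + 1) - x (m + d + 1) * x m =
      ((-1) ^ m * kFib k d) • (x 1 * x 1 - x 2 * x 0) := by
  induction m with
  | zero => simpa using mul_sub_mul_zero_of_recurrence hx d
  | succ m ih =>
    rw [show m + 1 + d = m + d + 1 by ring, mul_sub_mul_succ_succ_of_recurrence hx, ih, pow_succ,
      ← neg_smul]
    ring_nf

end Recurrence

theorem Q_add_two (k : ℝ) (n : ℕ) : Q k (n + 2) = k • Q k (n + 1) + Q k n := by
  have h (i : ℕ) : kFib k (n + i + 2) = k * kFib k (n + i + 1) + kFib k (n + i) := rfl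
  simp only [Q, Algebra.algebraMap_eq_smul_one]
  linear_combination (norm := module)
    h 0 • (1 : Bicomplex) + h 1 • bi + h 2 • bj + h 3 • (bi * bj)

theorem bi_mul_bi : bi * bi = -1 := by
  simp only [bi, Algebra.TensorProduct.tmul_mul_tmul, Complex.I_mul_I, mul_one,
    Algebra.TensorProduct.one_def, neg_tmul]

theorem bj_mul_bj : bj * bj = -1 := by
  simp only [bj, Algebra.TensorProduct.tmul_mul_tmul, Complex.I_mul_I, mul_one,
    Algebra.TensorProduct.one_def, tmul_neg]

namespace Bicomplex

-- `Algebra.smul_def` does not fire in `simp` here: the tensor-product module structure is not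
-- reducibly the algebra's.
theorem smul_eq_algebraMap_mul (r : ℝ) (x : Bicomplex) : r • x = algebraMap ℝ Bicomplex r * x :=
  Algebra.smul_def r x

noncomputable def mk (a b c d : ℝ) : Bicomplex :=
  algebraMap ℝ Bicomplex a + b • bi + c • bj + d • (bi * bj)

theorem mk_mul (a b c d a' b' c' d' : ℝ) :
    mk a b c d * mk a' b' c' d' =
      mk (a * a' - b * b' - c * c' + d * d') (a * b' + b * a' - c * d' - d * c')
        (a * c' + c * a' - b * d' - d * b') (a * d' + d * a' + b * c' + c * b') := by
  simp only [mk, smul_eq_algebraMap_mul, map_mul, map_add, map_sub]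
  set φ := algebraMap ℝ Bicomplex
  linear_combination
    (φ b * φ b' + (φ b * φ d' + φ d * φ b') * bj + φ d * φ d' * (bj * bj)) * bi_mul_bi
      + (φ c * φ c' - φ d * φ d' + (φ c * φ d' + φ d * φ c') * bi) * bj_mul_bj

theorem mk_sub (a b c d a' b' c' d' : ℝ) :
    mk a b c d - mk a' b' c' d' = mk (a - a') (b - b') (c - c') (d - d') := by
  simp only [mk, map_sub, sub_smul]
  abel

end Bicomplex

theorem Q_eq_mk (k : ℝ) (n : ℕ) :
    Q k n = Bicomplex.mk (kFib k n) (kFib k (n + 1)) (kFib k (n + 2)) (kFib k (n + 3)) := rfl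

theorem Q_one_mul_Q_one_sub_Q_two_mul_Q_zero (k : ℝ) :
    Q k 1 * Q k 1 - Q k 2 * Q k 0 = (2 * (k ^ 2 + 2)) • bj + (k ^ 3 + 2 * k) • (bi * bj) := by
  calc _ = Bicomplex.mk 0 0 (2 * (k ^ 2 + 2)) (k ^ 3 + 2 * k) := by
        simp only [Q_eq_mk, Bicomplex.mk_mul, Bicomplex.mk_sub]
        congr 1 <;> norm_num [kFib] <;> ring
    _ = _ := by simp [Bicomplex.mk]

theorem stmt16_general (k : ℝ) (n m : ℕ) (hmn : m ≤ n) :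
    Q k n * Q k (m + 1) - Q k (n + 1) * Q k m =
      ((-1 : ℝ) ^ m * kFib k (n - m)) •
        ((2 * (k ^ 2 + 2)) • bj + (k ^ 3 + 2 * k) • (bi * bj)) := by
  obtain ⟨d, rfl⟩ := Nat.exists_eq_add_of_le hmn
  rw [Nat.add_sub_cancel_left, ← Q_one_mul_Q_one_sub_Q_two_mul_Q_zero]
  exact dOcagne_of_recurrence (Q_add_two k) m d

theorem stmt16 (k : ℝ) (hk : 0 < k) (n m : ℕ) (hmn : m ≤ n) :
    Q k n * Q k (m + 1) - Q k (n + 1) * Q k m =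
      ((-1 : ℝ) ^ m * kFib k (n - m)) •
        ((2 * (k ^ 2 + 2)) • bj + (k ^ 3 + 2 * k) • (bi * bj)) :=
  stmt16_general k n m hmn
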